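/- arXiv:2308.01038 — 6 statements merged into one kernel-verified Lean document; each statement's English description precedes it below -/
import Mathlib

section
/- The point (S_E, I_E, R_E) with S_E = (μ+γ)N/β, I_E = N[β(μ+ξ−ν) − (μ+γ)(μ+ξ)]/(β(μ+γ+ξ)), R_E = N − S_E − I_E is an equilibrium of the SIR system with constant vaccination. -/
/-- The endemic point is an equilibrium of the constant-vaccination SIR system. -/
theorem endemic_equilibrium_constant_vaccination
    (μ β γ ξ ν N : ℝ) (hμ : 0 < μ) (hβ : 0 < β) (hγ : 0 < γ) (hξ : 0 < ξ)
    (hν : 0 < ν) (hN : 0 < N)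
    (SE IE RE : ℝ)
    (hS : SE = (μ + γ) * N / β)
    (hI : IE = N * (β * (μ + ξ - ν) - (μ + γ) * (μ + ξ)) / (β * (μ + γ + ξ)))
    (hR : RE = N - SE - IE) :
    μ * N - β * SE * IE / N - ν * N - μ * SE + ξ * RE = 0 ∧
    β * SE * IE / N - μ * IE - γ * IE = 0 ∧
    γ * IE + ν * N - μ * RE - ξ * RE = 0 := by
  have hβ' : β ≠ 0 := hβ.ne'
  have hN' : N ≠ 0 := hN.ne'
  have hd : μ + γ + ξ ≠ 0 := by positivity
  subst hS hI hR
  refine ⟨?_, ?_, ?_⟩ <;> (field_simp; ring)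
end

section
/- The characteristic polynomial of the Jacobian at the infection-free equilibrium of the constant-vaccination SIR system factors as (λ+μ)(λ+μ+ξ)(λ − [β(μ+ξ−ν) − (μ+γ)(μ+ξ)]/(μ+ξ)), i.e., the Jacobian has eigenvalues −μ, −(μ+ξ), and λ₃ = [β(μ+ξ−ν) − (μ+γ)(μ+ξ)]/(μ+ξ). -/
open Polynomial

/-- The characteristic polynomial of the Jacobian at the infection-free equilibrium
of the constant-vaccination SIR system factors with roots −μ, −(μ+ξ), and
λ₃ = [β(μ+ξ−ν) − (μ+γ)(μ+ξ)]/(μ+ξ). -/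
theorem charpoly_infection_free_constant_vaccination
    (μ β γ ξ ν N : ℝ) (hμ : 0 < μ) (hβ : 0 < β) (hγ : 0 < γ) (hξ : 0 < ξ)
    (hν : 0 < ν) (hN : 0 < N)
    (J : Matrix (Fin 3) (Fin 3) ℝ)
    (hJ : J = !![-μ, -(β * ((μ + ξ - ν) * N / (μ + ξ)) / N), ξ;
                 0, β * ((μ + ξ - ν) * N / (μ + ξ)) / N - (μ + γ), 0;
                 0, γ, -(μ + ξ)]) :
    J.charpoly =
      (X + C μ) * (X + C (μ + ξ)) *
        (X - C ((β * (μ + ξ - ν) - (μ + γ) * (μ + ξ)) / (μ + ξ))) := by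
  have hkey : β * ((μ + ξ - ν) * N / (μ + ξ)) / N - (μ + γ)
      = (β * (μ + ξ - ν) - (μ + γ) * (μ + ξ)) / (μ + ξ) := by
    field_simp
  subst hJ
  rw [Matrix.charpoly, Matrix.det_fin_three]
  simp [Matrix.charmatrix_apply, Matrix.diagonal_apply, Matrix.vecHead, Matrix.vecTail, hkey]
  ring
end

section
/- With A = μ+γ+ξ > 0, B = β(μ+ξ−ν) + ξ(μ+ξ), and C = (μ+γ+ξ)(β(μ+ξ−ν) − (μ+γ)(μ+ξ)): if β > β* = (μ+γ)(μ+ξ)/(μ+ξ−ν) and 0 < ν < μ+ξ, then B > 0 and C > 0, so both roots of Aλ² + Bλ + C = 0 have negative real part. -/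
/-- For β > β*, the coefficients B and C of the quadratic from the endemic
linearization are positive, so both (complex) roots have negative real part. -/
theorem endemic_quadratic_roots_stable
    (μ β γ ξ ν : ℝ) (hμ : 0 < μ) (hβ : 0 < β) (hγ : 0 < γ) (hξ : 0 < ξ)
    (hν : 0 < ν) (hνsmall : ν < μ + ξ)
    (hbeta : β > (μ + γ) * (μ + ξ) / (μ + ξ - ν))
    (A B C : ℝ)
    (hA : A = μ + γ + ξ)
    (hB : B = β * (μ + ξ - ν) + ξ * (μ + ξ))
    (hC : C = (μ + γ + ξ) * (β * (μ + ξ - ν) - (μ + γ) * (μ + ξ))) :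
    0 < B ∧ 0 < C ∧
      ∀ lam : ℂ, (A : ℂ) * lam ^ 2 + (B : ℂ) * lam + (C : ℂ) = 0 → lam.re < 0 := by
  have hpos : 0 < μ + ξ - ν := by linarith
  have hkey : (μ + γ) * (μ + ξ) < β * (μ + ξ - ν) := by
    have := (div_lt_iff₀ hpos).mp hbeta
    linarith
  have hApos : 0 < A := by rw [hA]; linarith
  have hBpos : 0 < B := by
    rw [hB]
    have := mul_pos hξ (by linarith : (0:ℝ) < μ + ξ)
    nlinarith
  have hCpos : 0 < C := by
    rw [hC]
    have : (0:ℝ) < μ + γ + ξ := by linarith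
    nlinarith
  refine ⟨hBpos, hCpos, ?_⟩
  intro lam heq
  set x := lam.re with hx
  set y := lam.im with hy
  have hre : A * (x * x - y * y) + B * x + C = 0 := by
    have := congrArg Complex.re heq
    simp [Complex.add_re, Complex.mul_re, Complex.ofReal_re, Complex.ofReal_im,
      pow_two, Complex.mul_im] at this
    linarith [this]
  have him : y * (2 * A * x + B) = 0 := by
    have := congrArg Complex.im heq
    simp [Complex.add_im, Complex.mul_im, Complex.ofReal_re, Complex.ofReal_im,
      pow_two, Complex.mul_re] at this
    nlinarith [this]
  by_contra hxe
  push_neg at hxe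
  have hy0 : y = 0 := by
    rcases mul_eq_zero.mp him with h | h
    · exact h
    · nlinarith
  rw [hy0] at hre
  nlinarith
end

section
/- For all positive parameters μ, γ, ξ, ν with ν < μ+ξ, the transcritical thresholds satisfy β*(ν) = (μ+γ)(μ+ξ)/(μ+ξ−ν) > β̂*(ν) = (μ+γ)(μ+ξ+ν)/(μ+ξ); i.e., the constant-vaccination scheme tolerates strictly higher infectiousness before the endemic state appears than the scaled-vaccination scheme. -/
/-- The constant-vaccination transcritical threshold strictly exceeds the
scaled-vaccination one: β*(ν) > β̂*(ν). -/
theorem constant_threshold_gt_scaled_threshold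
    (μ γ ξ ν : ℝ) (hμ : 0 < μ) (hγ : 0 < γ) (hξ : 0 < ξ)
    (hν : 0 < ν) (hνsmall : ν < μ + ξ) :
    (μ + γ) * (μ + ξ) / (μ + ξ - ν) > (μ + γ) * (μ + ξ + ν) / (μ + ξ) := by
  rw [gt_iff_lt, div_lt_div_iff₀ (by linarith) (by linarith)]
  nlinarith [sq_nonneg ν, mul_pos hμ hν, mul_pos hγ hν]
end

section
/- If β > β*(ν) = (μ+γ)(μ+ξ)/(μ+ξ−ν) (so both endemic equilibria are positive), then the endemic infection levels satisfy I_E = N[β(μ+ξ−ν) − (μ+γ)(μ+ξ)]/(β(μ+γ+ξ)) < Î_E = N[β(μ+ξ) − (μ+γ)(μ+ξ+ν)]/(β(μ+γ+ξ)); equivalently, constant vaccination yields strictly lower endemic infection than scaled vaccination, provided β > μ+γ. -/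
/-- For β above the constant-vaccination threshold, the constant-vaccination
endemic infection is strictly lower than the scaled-vaccination one. -/
theorem constant_endemic_infection_lt_scaled
    (μ β γ ξ ν N : ℝ) (hμ : 0 < μ) (hβ : 0 < β) (hγ : 0 < γ) (hξ : 0 < ξ)
    (hν : 0 < ν) (hN : 0 < N) (hνsmall : ν < μ + ξ)
    (hbeta : β > (μ + γ) * (μ + ξ) / (μ + ξ - ν)) :
    N * (β * (μ + ξ - ν) - (μ + γ) * (μ + ξ)) / (β * (μ + γ + ξ)) <
      N * (β * (μ + ξ) - (μ + γ) * (μ + ξ + ν)) / (β * (μ + γ + ξ)) := by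
  have hd : (0:ℝ) < μ + ξ - ν := by linarith
  have hb : (μ + γ) * (μ + ξ) / (μ + ξ - ν) ≥ μ + γ := by
    rw [ge_iff_le, le_div_iff₀ hd]; nlinarith
  have hβbig : β > μ + γ := lt_of_le_of_lt hb hbeta
  have hden : (0:ℝ) < β * (μ + γ + ξ) := by positivity
  apply div_lt_div_of_pos_right ?_ hden
  nlinarith [mul_pos hN (mul_pos (sub_pos.mpr hβbig) hν)]
end

section
/- With K = 2(γ+μ)² + ξ(4γ+3μ+ξ) and β± = (K ± 2√(γ(γ+μ+ξ)³))/(μ+ξ−ν) for 0 < ν < μ+ξ, the discriminant B² − 4AC of the quadratic Aλ² + Bλ + C (A = μ+γ+ξ, B = β(μ+ξ−ν) + ξ(μ+ξ), C = (μ+γ+ξ)(β(μ+ξ−ν) − (μ+γ)(μ+ξ))) is negative if and only if β₋ < β < β₊. -/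
/-- The discriminant B² − 4AC of the endemic-equilibrium quadratic is negative
iff β lies strictly between β₋ and β₊. -/
theorem discriminant_negative_iff_beta_between
    (μ β γ ξ ν : ℝ) (hμ : 0 < μ) (hβ : 0 < β) (hγ : 0 < γ) (hξ : 0 < ξ)
    (hν : 0 < ν) (hνsmall : ν < μ + ξ)
    (A B C K βminus βplus : ℝ)
    (hA : A = μ + γ + ξ)
    (hB : B = β * (μ + ξ - ν) + ξ * (μ + ξ))
    (hC : C = (μ + γ + ξ) * (β * (μ + ξ - ν) - (μ + γ) * (μ + ξ)))
    (hK : K = 2 * (γ + μ) ^ 2 + ξ * (4 * γ + 3 * μ + ξ))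
    (hminus : βminus = (K - 2 * Real.sqrt (γ * (γ + μ + ξ) ^ 3)) / (μ + ξ - ν))
    (hplus : βplus = (K + 2 * Real.sqrt (γ * (γ + μ + ξ) ^ 3)) / (μ + ξ - ν)) :
    B ^ 2 - 4 * A * C < 0 ↔ (βminus < β ∧ β < βplus) := by
  have hd : 0 < μ + ξ - ν := by linarith
  set s := Real.sqrt (γ * (γ + μ + ξ) ^ 3) with hsdef
  have hs0 : 0 ≤ s := Real.sqrt_nonneg _
  have hs2 : s ^ 2 = γ * (γ + μ + ξ) ^ 3 := by
    rw [hsdef, Real.sq_sqrt]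
    positivity
  have hident : B ^ 2 - 4 * A * C
      = (β * (μ + ξ - ν) - K) ^ 2 - 4 * s ^ 2 := by
    rw [hA, hB, hC, hK, hs2]; ring
  rw [hident, hminus, hplus, div_lt_iff₀ hd, lt_div_iff₀ hd]
  constructor
  · intro h
    constructor
    · nlinarith [sq_nonneg (β * (μ + ξ - ν) - K + 2 * s)]
    · nlinarith [sq_nonneg (β * (μ + ξ - ν) - K - 2 * s)]
  · rintro ⟨h1, h2⟩
    nlinarith
end
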